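/- arXiv:2003.00539 — 3 statements merged into one kernel-verified Lean document; each statement's English description precedes it below -/
import Mathlib

section
/- There exist a finite set Λ ⊆ ∂B_1 ∩ Q^d of rational unit vectors and smooth nonnegative functions a_ξ : ∂B_1 → [0,∞) for ξ ∈ Λ such that every R ∈ ∂B_1 can be decomposed as R = Σ_{ξ ∈ Λ} a_ξ(R) ξ. -/
open MeasureTheory Set
open scoped ENNReal NNReal RealInnerProductSpace BigOperators

noncomputable section

abbrev Rd (d : ℕ) := EuclideanSpace ℝ (Fin d)
def RationalVector {d : ℕ} (ξ : Rd d) : Prop := ∀ i, ∃ q : ℚ, ξ i = (q : ℝ)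

lemma single_inj (d : ℕ) : Function.Injective (fun i : Fin d => EuclideanSpace.single i (1:ℝ)) := by
  intro i j h
  by_contra hne
  have := congrFun (congrArg (fun v : Rd d => (v : Fin d → ℝ)) h) i
  simp [EuclideanSpace.single_apply, Ne.symm hne] at this

/-- **Geometric lemma.**  There exist a finite set `Λ ⊆ ∂B₁ ∩ ℚ^d` of rational unit
vectors and smooth nonnegative coefficients `a_ξ` on the unit sphere such that every
`R ∈ ∂B₁` decomposes as `R = ∑_{ξ ∈ Λ} a_ξ(R) ξ`.  (Smoothness of `a_ξ` on the sphere is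
encoded by smoothness of an extension to `ℝ^d`.) -/
theorem geometric_lemma (d : ℕ) (hd : 2 ≤ d) :
    ∃ Λ : Finset (Rd d),
      (∀ ξ ∈ Λ, ‖ξ‖ = 1 ∧ RationalVector ξ) ∧
      ∃ a : Rd d → Rd d → ℝ,
        (∀ ξ ∈ Λ, ContDiff ℝ (⊤ : ℕ∞) (a ξ)) ∧
        (∀ ξ ∈ Λ, ∀ R : Rd d, ‖R‖ = 1 → 0 ≤ a ξ R) ∧
        (∀ R : Rd d, ‖R‖ = 1 → R = ∑ ξ ∈ Λ, a ξ R • ξ) := by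
  classical
  set P : Finset (Rd d) := Finset.univ.image (fun i : Fin d => EuclideanSpace.single i (1:ℝ)) with hP
  set N : Finset (Rd d) := Finset.univ.image (fun i : Fin d => -EuclideanSpace.single i (1:ℝ)) with hN
  have hdisj : Disjoint P N := by
    rw [Finset.disjoint_left]
    rintro x hx hy
    simp only [hP, hN, Finset.mem_image, Finset.mem_univ, true_and] at hx hy
    obtain ⟨i, hi⟩ := hx
    obtain ⟨j, hj⟩ := hy
    have h1 : x i = 1 := by rw [← hi]; simp [EuclideanSpace.single_apply]
    have h2 : x i = -(if i = j then (1:ℝ) else 0) := by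
      rw [← hj]; simp [EuclideanSpace.single_apply]
    rw [h1] at h2
    by_cases h : i = j <;> simp [h] at h2 <;> linarith
  refine ⟨P ∪ N, ?_, fun ξ R => (⟪ξ, R⟫ + 1) / 2, ?_, ?_, ?_⟩
  · intro ξ hξ
    have hnorm : ∀ i : Fin d, ‖(EuclideanSpace.single i (1:ℝ) : Rd d)‖ = 1 := by
      intro i; rw [EuclideanSpace.norm_single]; norm_num
    have hrat : ∀ i : Fin d, RationalVector (EuclideanSpace.single i (1:ℝ) : Rd d) := by
      intro i j
      by_cases h : j = i
      · exact ⟨1, by simp [EuclideanSpace.single_apply, h]⟩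
      · exact ⟨0, by simp [EuclideanSpace.single_apply, h]⟩
    rcases Finset.mem_union.1 hξ with h | h <;>
      simp only [hP, hN, Finset.mem_image, Finset.mem_univ, true_and] at h <;>
      obtain ⟨i, rfl⟩ := h
    · exact ⟨hnorm i, hrat i⟩
    · refine ⟨by rw [norm_neg]; exact hnorm i, fun j => ?_⟩
      obtain ⟨q, hq⟩ := hrat i j
      exact ⟨-q, by push_cast; simp only [PiLp.neg_apply]; rw [hq]⟩
  · intro ξ _
    exact (((contDiff_const.inner ℝ contDiff_id).add contDiff_const).div_const 2)
  · intro ξ hξ R hR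
    have h1 : ‖ξ‖ = 1 := by
      rcases Finset.mem_union.1 hξ with h | h <;>
        simp only [hP, hN, Finset.mem_image, Finset.mem_univ, true_and] at h <;>
        obtain ⟨i, rfl⟩ := h
      · rw [EuclideanSpace.norm_single]; norm_num
      · rw [norm_neg, EuclideanSpace.norm_single]; norm_num
    have := abs_real_inner_le_norm ξ R
    rw [h1, hR] at this
    have := abs_le.1 this
    linarith [this.1]
  · intro R hR
    rw [Finset.sum_union hdisj, hP, hN,
      Finset.sum_image (fun i _ j _ h => single_inj d h),
      Finset.sum_image (fun i _ j _ h => single_inj d (neg_injective h))]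
    have hinner : ∀ i : Fin d, ⟪(EuclideanSpace.single i (1:ℝ) : Rd d), R⟫ = R i := by
      intro i
      rw [EuclideanSpace.inner_single_left]
      simp
    have key : ∀ i : Fin d,
        ((⟪(EuclideanSpace.single i (1:ℝ) : Rd d), R⟫ + 1) / 2) • (EuclideanSpace.single i (1:ℝ) : Rd d)
          + ((⟪-(EuclideanSpace.single i (1:ℝ) : Rd d), R⟫ + 1) / 2) • (-(EuclideanSpace.single i (1:ℝ) : Rd d))
          = R i • (EuclideanSpace.single i (1:ℝ) : Rd d) := by
      intro i
      rw [inner_neg_left, hinner, smul_neg, ← sub_eq_add_neg, ← sub_smul]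
      ring_nf
    rw [← Finset.sum_add_distrib]
    simp_rw [key]
    have := (EuclideanSpace.basisFun (Fin d) ℝ).sum_repr R
    simp only [EuclideanSpace.basisFun_apply, EuclideanSpace.basisFun_repr] at this
    exact this.symm
end
end

section
/- Let d ≥ 3, let ρ ∈ (0,1/4), and let Λ ⊆ S^{d−1} ∩ Q^d be a finite set of rational unit vectors. Then there exist μ_0 = μ_0(d, Λ) > 0 and a family of vectors {v_ξ}_{ξ∈Λ} ⊆ R^d such that the periodized cylinders v_ξ + B_{2ρ μ^{−1}} + R ξ + Z^d are pairwise disjoint as ξ varies in Λ, provided μ ≥ μ_0. -/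
/-!
Write `S(ξ, ξ') = ℝξ + ℝξ' + ℤ^d`. A common point of the periodized cylinders of radius `r`
around `v + ℝξ` and `v' + ℝξ'` forces `v - v'` to lie within `2r` of `S(ξ, ξ')`. For `d ≥ 3`
this set is a countable union of translates of a plane, hence Lebesgue-null, so the `v_ξ` can be
chosen one at a time with `v_ξ - v_ξ' ∉ S(ξ, ξ')`. For rational `ξ, ξ'` the plane is spanned by
integer vectors, so `S(ξ, ξ')` is the `ℤ^d`-saturation of a compact parallelogram and is closed:
each `v_ξ - v_ξ'` has positive distance from it, and the radius `2ρ/μ` eventually drops below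
half of all these distances.
-/

open MeasureTheory Set
open scoped ENNReal NNReal RealInnerProductSpace BigOperators

noncomputable section

/-- The integer vector `k` viewed as a point of `ℝ^d`. -/
def intVec {d : ℕ} (k : Fin d → ℤ) : Rd d := WithLp.toLp 2 (fun i => (k i : ℝ))

/-- The ℤ^d-periodization of the open cylinder of radius `r` around the line through `v`
with direction `ξ`, i.e. the set `v + B_r + ℝ ξ + ℤ^d`. -/
def perCyl {d : ℕ} (v ξ : Rd d) (r : ℝ) : Set (Rd d) :=
  {x | ∃ (t : ℝ) (k : Fin d → ℤ), dist x (v + t • ξ + intVec k) < r}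

open Filter Topology

lemma exists_forall_sub_notMem_of_measure_zero {G ι : Type*} [AddCommGroup G] [MeasurableSpace G]
    [MeasurableAdd G] (μ : Measure G) [NeZero μ] [μ.IsAddLeftInvariant] (B : ι → ι → Set G)
    (hB : ∀ i j, μ (B i j) = 0) (hneg : ∀ i j x, x ∈ B i j → -x ∈ B j i) (s : Finset ι) :
    ∃ v : ι → G, ∀ i ∈ s, ∀ j ∈ s, i ≠ j → v i - v j ∉ B i j := by
  classical
  induction s using Finset.induction_on with
  | empty => exact ⟨0, by simp⟩
  | insert a s ha ih =>
    obtain ⟨v, hv⟩ := ih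
    obtain ⟨u, hu⟩ : ∃ u, ∀ j ∈ s, u - v j ∉ B a j := by
      have hnull : μ (⋃ j ∈ s, (-v j + ·) ⁻¹' B a j) = 0 :=
        (measure_biUnion_null_iff s.countable_toSet).2 fun j _ => by
          rw [measure_preimage_add]
          exact hB a j
      simpa [neg_add_eq_sub] using (measure_eq_zero_iff_ae_notMem.1 hnull).exists
    have hne : ∀ j ∈ s, j ≠ a := fun j hj h => ha (h ▸ hj)
    refine ⟨Function.update v a u, ?_⟩
    simp only [Finset.forall_mem_insert, ne_eq, not_true_eq_false, IsEmpty.forall_iff, true_and,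
      Function.update_self]
    refine ⟨fun j hj _ => ?_, fun i hi => ⟨fun _ hmem => ?_, fun j hj hij => ?_⟩⟩
    · rw [Function.update_of_ne (hne j hj)]
      exact hu j hj
    · rw [Function.update_of_ne (hne i hi)] at hmem
      exact hu i hi (by simpa using hneg i a _ hmem)
    · rw [Function.update_of_ne (hne i hi), Function.update_of_ne (hne j hj)]
      exact hv i hi j hj hij

section Lattice

variable {d : ℕ}

lemma intVec_add (k k' : Fin d → ℤ) : intVec (k + k') = intVec k + intVec k' := by
  ext i; simp [intVec]

lemma intVec_neg (k : Fin d → ℤ) : intVec (-k) = -intVec k := by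
  ext i; simp [intVec]

lemma intVec_sub (k k' : Fin d → ℤ) : intVec (k - k') = intVec k - intVec k' := by
  ext i; simp [intVec]

lemma intVec_zsmul (m : ℤ) (k : Fin d → ℤ) : intVec (m • k) = (m : ℝ) • intVec k := by
  ext i; simp [intVec]

lemma range_intVec : range (intVec (d := d)) = ⋂ i, (fun x : Rd d => x i) ⁻¹' range Int.cast := by
  ext x
  simp only [mem_range, mem_iInter, mem_preimage]
  refine ⟨?_, fun h => ?_⟩
  · rintro ⟨k, rfl⟩ i
    exact ⟨k i, rfl⟩
  · choose k hk using h
    exact ⟨k, by ext i; exact hk i⟩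

lemma isClosed_range_intVec : IsClosed (range (intVec (d := d))) := by
  rw [range_intVec]
  exact isClosed_iInter fun i => Real.isClosed_range_intCast.preimage (by fun_prop)

lemma RationalVector.exists_natCast_smul_eq_intVec {ξ : Rd d} (hξ : RationalVector ξ) :
    ∃ N : ℕ, 0 < N ∧ ∃ k : Fin d → ℤ, (N : ℝ) • ξ = intVec k := by
  choose q hq using hξ
  refine ⟨∏ i, (q i).den, Finset.prod_pos fun i _ => (q i).pos, ?_⟩
  have hint : ∀ i, ∃ z : ℤ, ((∏ j, (q j).den : ℕ) : ℝ) * ξ i = z := by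
    intro i
    obtain ⟨c, hc⟩ := Finset.dvd_prod_of_mem (fun j => (q j).den) (Finset.mem_univ i)
    have hnum : ((q i).num : ℝ) = q i * (q i).den := by
      exact_mod_cast (Rat.mul_den_eq_num (q i)).symm
    refine ⟨(q i).num * c, ?_⟩
    rw [hc, hq i]
    push_cast
    rw [hnum]
    ring
  choose k hk using hint
  exact ⟨k, by ext i; exact hk i⟩

end Lattice

open scoped Pointwise

section SpanPairAddLattice

variable {d : ℕ}

def spanPairAddLattice (ξ ξ' : Rd d) : Set (Rd d) :=
  (Submodule.span ℝ {ξ, ξ'} : Set (Rd d)) + range intVec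

lemma spanPairAddLattice_nonempty (ξ ξ' : Rd d) : (spanPairAddLattice ξ ξ').Nonempty :=
  Set.add_nonempty.2 ⟨⟨0, Submodule.zero_mem _⟩, range_nonempty _⟩

lemma neg_mem_spanPairAddLattice_swap {ξ ξ' x : Rd d} (hx : x ∈ spanPairAddLattice ξ ξ') :
    -x ∈ spanPairAddLattice ξ' ξ := by
  obtain ⟨w, hw, _, ⟨k, rfl⟩, rfl⟩ := hx
  rw [spanPairAddLattice, Set.pair_comm, neg_add, ← intVec_neg]
  exact add_mem_add (Submodule.neg_mem _ hw) (mem_range_self _)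

lemma volume_spanPairAddLattice (hd : 3 ≤ d) (ξ ξ' : Rd d) :
    volume (spanPairAddLattice ξ ξ') = 0 := by
  classical
  have hW : Submodule.span ℝ {ξ, ξ'} ≠ ⊤ := fun htop => by
    have hrank := finrank_span_finset_le_card (R := ℝ) ({ξ, ξ'} : Finset (Rd d))
    rw [Finset.coe_pair, Set.finrank, htop, finrank_top, finrank_euclideanSpace_fin] at hrank
    have := hrank.trans Finset.card_le_two
    omega
  rw [spanPairAddLattice, add_comm, ← iUnion_add_left_image, biUnion_range]
  refine measure_iUnion_null fun k => ?_
  rw [image_add_left, measure_preimage_add]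
  exact Measure.addHaar_submodule volume _ hW

lemma isClosed_span_intVec_pair_add_range (a b : Fin d → ℤ) :
    IsClosed ((Submodule.span ℝ {intVec a, intVec b} : Set (Rd d)) + range intVec) := by
  have hfund : (Submodule.span ℝ {intVec a, intVec b} : Set (Rd d)) + range intVec =
      (fun p : ℝ × ℝ => p.1 • intVec a + p.2 • intVec b) '' (Icc 0 1 ×ˢ Icc 0 1) +
        range intVec := by
    refine Subset.antisymm ?_ (add_subset_add (image_subset_iff.2 fun p _ =>
      Submodule.mem_span_pair.2 ⟨p.1, p.2, rfl⟩) subset_rfl)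
    rintro _ ⟨_, hw, _, ⟨k, rfl⟩, rfl⟩
    obtain ⟨s, t, rfl⟩ := Submodule.mem_span_pair.1 hw
    refine ⟨_, ⟨(Int.fract s, Int.fract t), ⟨⟨Int.fract_nonneg s, (Int.fract_lt_one s).le⟩,
      ⟨Int.fract_nonneg t, (Int.fract_lt_one t).le⟩⟩, rfl⟩, _,
      mem_range_self (⌊s⌋ • a + ⌊t⌋ • b + k), ?_⟩
    simp only [intVec_add, intVec_zsmul]
    conv_rhs => rw [← Int.fract_add_floor s, ← Int.fract_add_floor t]
    module
  rw [hfund]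
  exact isClosed_range_intVec.add_left_of_isCompact
    ((isCompact_Icc.prod isCompact_Icc).image (by fun_prop))

lemma isClosed_spanPairAddLattice {ξ ξ' : Rd d} (hξ : RationalVector ξ)
    (hξ' : RationalVector ξ') : IsClosed (spanPairAddLattice ξ ξ') := by
  obtain ⟨N, hN, a, ha⟩ := hξ.exists_natCast_smul_eq_intVec
  obtain ⟨N', hN', b, hb⟩ := hξ'.exists_natCast_smul_eq_intVec
  have hspan : Submodule.span ℝ {ξ, ξ'} = Submodule.span ℝ {intVec a, intVec b} := by
    rw [← ha, ← hb, Submodule.span_insert, Submodule.span_insert,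
      Submodule.span_singleton_smul_eq, Submodule.span_singleton_smul_eq] <;>
      exact (Nat.cast_ne_zero.2 (by omega)).isUnit
  rw [spanPairAddLattice, hspan]
  exact isClosed_span_intVec_pair_add_range a b

lemma infDist_sub_lt_of_mem_perCyl {v v' ξ ξ' x : Rd d} {r : ℝ} (hx : x ∈ perCyl v ξ r)
    (hx' : x ∈ perCyl v' ξ' r) : Metric.infDist (v - v') (spanPairAddLattice ξ ξ') < 2 * r := by
  obtain ⟨t, k, hk⟩ := hx
  obtain ⟨t', k', hk'⟩ := hx'
  have hmem : (-t) • ξ + t' • ξ' + intVec (k' - k) ∈ spanPairAddLattice ξ ξ' :=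
    add_mem_add (Submodule.mem_span_pair.2 ⟨-t, t', rfl⟩) (mem_range_self _)
  calc Metric.infDist (v - v') (spanPairAddLattice ξ ξ')
      ≤ dist (v - v') ((-t) • ξ + t' • ξ' + intVec (k' - k)) := Metric.infDist_le_dist_of_mem hmem
    _ = dist (v + t • ξ + intVec k) (v' + t' • ξ' + intVec k') := by
        rw [dist_eq_norm, dist_eq_norm, intVec_sub]
        congr 1
        module
    _ ≤ dist x (v + t • ξ + intVec k) + dist x (v' + t' • ξ' + intVec k') :=
        dist_triangle_left _ _ _
    _ < 2 * r := by linarith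

lemma disjoint_perCyl_of_two_mul_le_infDist {v v' ξ ξ' : Rd d} {r : ℝ}
    (h : 2 * r ≤ Metric.infDist (v - v') (spanPairAddLattice ξ ξ')) :
    Disjoint (perCyl v ξ r) (perCyl v' ξ' r) :=
  Set.disjoint_left.2 fun _ hx hx' => (infDist_sub_lt_of_mem_perCyl hx hx').not_ge h

end SpanPairAddLattice

theorem disjoint_periodized_cylinders_general (d : ℕ) (hd : 3 ≤ d) (ρ : ℝ)
    (Λ : Finset (Rd d)) (hΛ : ∀ ξ ∈ Λ, ‖ξ‖ = 1 ∧ RationalVector ξ) :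
    ∃ μ₀ : ℝ, 0 < μ₀ ∧ ∃ v : Rd d → Rd d,
      ∀ μ : ℝ, μ₀ ≤ μ →
        ∀ ξ ∈ Λ, ∀ ξ' ∈ Λ, ξ ≠ ξ' →
          Disjoint (perCyl (v ξ) ξ (2 * ρ / μ)) (perCyl (v ξ') ξ' (2 * ρ / μ)) := by
  obtain ⟨v, hv⟩ := exists_forall_sub_notMem_of_measure_zero volume spanPairAddLattice
    (fun _ _ => volume_spanPairAddLattice hd _ _) (fun _ _ _ => neg_mem_spanPairAddLattice_swap) Λ
  have hradius : Tendsto (fun μ : ℝ => 2 * (2 * ρ / μ)) atTop (𝓝 0) := by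
    simpa using (tendsto_const_nhds.div_atTop tendsto_id).const_mul (2 : ℝ)
  have hev : ∀ᶠ μ in atTop, ∀ ξ ∈ Λ, ∀ ξ' ∈ Λ, ξ ≠ ξ' →
      Disjoint (perCyl (v ξ) ξ (2 * ρ / μ)) (perCyl (v ξ') ξ' (2 * ρ / μ)) := by
    simp only [eventually_all_finset, eventually_imp_distrib_left]
    intro ξ hξ ξ' hξ' hne
    have hpos : 0 < Metric.infDist (v ξ - v ξ') (spanPairAddLattice ξ ξ') :=
      ((isClosed_spanPairAddLattice (hΛ ξ hξ).2 (hΛ ξ' hξ').2).notMem_iff_infDist_pos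
        (spanPairAddLattice_nonempty ξ ξ')).1 (hv ξ hξ ξ' hξ' hne)
    filter_upwards [hradius.eventually (gt_mem_nhds hpos)] with μ hμ
    exact disjoint_perCyl_of_two_mul_le_infDist hμ.le
  obtain ⟨μ₀, hμ₀⟩ := eventually_atTop.1 hev
  exact ⟨max μ₀ 1, by positivity, v, fun μ hμ => hμ₀ μ (le_of_max_le_left hμ)⟩

/-- In dimension `d ≥ 3`, for any finite set `Λ` of rational unit vectors and any
`ρ ∈ (0,1/4)` there are `μ₀ = μ₀(d,Λ) > 0` and translation vectors `v_ξ` such that the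
periodized cylinders `v_ξ + B_{2ρ/μ} + ℝ ξ + ℤ^d`, `ξ ∈ Λ`, are pairwise disjoint for
all `μ ≥ μ₀`. -/
theorem disjoint_periodized_cylinders (d : ℕ) (hd : 3 ≤ d) (ρ : ℝ) (hρ0 : 0 < ρ)
    (hρ1 : ρ < 1/4) (Λ : Finset (Rd d)) (hΛ : ∀ ξ ∈ Λ, ‖ξ‖ = 1 ∧ RationalVector ξ) :
    ∃ μ₀ : ℝ, 0 < μ₀ ∧ ∃ v : Rd d → Rd d,
      ∀ μ : ℝ, μ₀ ≤ μ →
        ∀ ξ ∈ Λ, ∀ ξ' ∈ Λ, ξ ≠ ξ' →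
          Disjoint (perCyl (v ξ) ξ (2 * ρ / μ)) (perCyl (v ξ') ξ' (2 * ρ / μ)) :=
  disjoint_periodized_cylinders_general d hd ρ Λ hΛ
end
end

section
/- Let d ≥ 2, 0 < β < d and q > 1. If there exist g ∈ L^1(B_1) and h ∈ L^q(B_1) (B_1 ⊂ R^d the unit ball) such that | |x|^{−β} − |y|^{−β} | ≤ |x − y| ( g(x) + h(y) ) for all x, y ∈ B_1, then q ≤ (d−1)/β. -/
/-!
Fix a small scale `s`. Since `g ∈ L¹`, some `x` with `s ≤ |x| < 2s` has `g x ≲ s^{-d}` (a point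
below the average of `g` on that annulus). Plugging this `x` into the inequality, every `y` with
`0 < |y| ≤ s/2` satisfies `h y ≳ |y|^{-β}/s - s^{-d}`, hence `h ≳ ρ^{-β}/s` on the ball of radius
`ρ = a s^γ`, `γ = max 1 ((d-1)/β)`, for a small constant `a`. Chebyshev's inequality then gives
`‖h‖_q^q ≳ s^{γ(d-βq)-q}`, and this exponent is negative as soon as `q > (d-1)/β`, so letting
`s → 0` contradicts `h ∈ L^q`.
-/

open MeasureTheory Set
open scoped ENNReal NNReal RealInnerProductSpace BigOperators

noncomputable section

open Metric Filter Topology Module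

def AsymmetricLusinLipschitz {E : Type*} [SeminormedAddCommGroup E] (β : ℝ) (g h : E → ℝ) :
    Prop :=
  ∀ x ∈ ball (0 : E) 1, ∀ y ∈ ball (0 : E) 1, x ≠ 0 → y ≠ 0 →
    |‖x‖ ^ (-β) - ‖y‖ ^ (-β)| ≤ ‖x - y‖ * (g x + h y)

lemma one_sub_two_rpow_neg_mul_le {β a b : ℝ} (hβ : 0 < β) (hb : 0 < b) (hab : 2 * b ≤ a) :
    (1 - 2 ^ (-β)) * b ^ (-β) ≤ b ^ (-β) - a ^ (-β) := by
  have : a ^ (-β) ≤ 2 ^ (-β) * b ^ (-β) := by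
    rw [← Real.mul_rpow zero_le_two hb.le]
    exact Real.rpow_le_rpow_of_nonpos (by positivity) hab (by linarith)
  linarith

lemma div_le_of_abs_rpow_neg_sub_le {E : Type*} [SeminormedAddCommGroup E] {β s u : ℝ} {x y : E}
    (hβ : 0 < β) (hs : 0 < s) (hx : s ≤ ‖x‖) (hx' : ‖x‖ ≤ 2 * s) (hy : 0 < ‖y‖) (hy' : 2 * ‖y‖ ≤ s)
    (hxy : |‖x‖ ^ (-β) - ‖y‖ ^ (-β)| ≤ ‖x - y‖ * u) :
    (1 - 2 ^ (-β)) / 3 * ‖y‖ ^ (-β) / s ≤ u := by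
  have hgap : 0 < (1 - 2 ^ (-β)) * ‖y‖ ^ (-β) :=
    mul_pos (sub_pos.2 (Real.rpow_lt_one_of_one_lt_of_neg one_lt_two (neg_lt_zero.2 hβ)))
      (Real.rpow_pos_of_pos hy _)
  have hlow : (1 - 2 ^ (-β)) * ‖y‖ ^ (-β) ≤ ‖x - y‖ * u :=
    (one_sub_two_rpow_neg_mul_le hβ hy (by linarith)).trans
      ((le_abs_self _).trans_eq (abs_sub_comm _ _)) |>.trans hxy
  have hu : 0 < u := pos_of_mul_pos_right (hgap.trans_le hlow) (norm_nonneg _)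
  have hdist : ‖x - y‖ ≤ 3 * s := (norm_sub_le x y).trans (by linarith)
  rw [div_le_iff₀ hs]
  nlinarith

lemma rpow_mul_measureReal_le_setIntegral_norm_rpow {X : Type*} [MeasurableSpace X]
    {μ : Measure X} {f : X → ℝ} {S T : Set X} {L q : ℝ} (hL : 0 ≤ L) (hq : 0 ≤ q)
    (hS : MeasurableSet S) (hST : S ⊆ T) (hμS : μ S ≠ ∞)
    (hf : IntegrableOn (fun y ↦ ‖f y‖ ^ q) T μ) (hLf : ∀ᵐ y ∂μ, y ∈ S → L ≤ f y) :
    L ^ q * μ.real S ≤ ∫ y in T, ‖f y‖ ^ q ∂μ :=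
  calc L ^ q * μ.real S = ∫ _ in S, L ^ q ∂μ := by rw [setIntegral_const, smul_eq_mul, mul_comm]
    _ ≤ ∫ y in S, ‖f y‖ ^ q ∂μ :=
      setIntegral_mono_on_ae (integrableOn_const hμS) (hf.mono_set hST) hS <| by
        filter_upwards [hLf] with y hy hyS
        exact Real.rpow_le_rpow hL ((hy hyS).trans (le_abs_self _)) hq
    _ ≤ ∫ y in T, ‖f y‖ ^ q ∂μ :=
      setIntegral_mono_set hf (ae_of_all _ fun _ ↦ by positivity) hST.eventuallyLE

section AddHaar

variable {E : Type*} [NormedAddCommGroup E] [NormedSpace ℝ E] [FiniteDimensional ℝ E]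
  [MeasurableSpace E] [BorelSpace E] [Nontrivial E] {μ : Measure E} [μ.IsAddHaarMeasure]

lemma addHaar_real_ball (x : E) {r : ℝ} (hr : 0 ≤ r) :
    μ.real (ball x r) = r ^ finrank ℝ E * μ.real (ball 0 1) := by
  rw [measureReal_def, Measure.addHaar_ball _ _ hr, ENNReal.toReal_mul,
    ENNReal.toReal_ofReal (by positivity), measureReal_def]

lemma addHaar_real_ball_two_mul_sdiff_ball (x : E) {s : ℝ} (hs : 0 ≤ s) :
    μ.real (ball x (2 * s) \ ball x s) =
      (2 ^ finrank ℝ E - 1) * s ^ finrank ℝ E * μ.real (ball 0 1) := by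
  rw [measureReal_sdiff (ball_subset_ball (by linarith)) measurableSet_ball,
    addHaar_real_ball x (by positivity), addHaar_real_ball x hs, mul_pow]
  ring

lemma exists_mem_annulus_le_div_pow {g : E → ℝ} (hg : IntegrableOn g (ball 0 1) μ) :
    ∃ K ≥ 0, ∀ s, 0 < s → 2 * s ≤ 1 →
      ∃ x : E, s ≤ ‖x‖ ∧ ‖x‖ < 2 * s ∧ g x ≤ K / s ^ finrank ℝ E := by
  set n := finrank ℝ E
  have hV : 0 < μ.real (ball (0 : E) 1) :=
    ENNReal.toReal_pos (measure_ball_pos μ 0 one_pos).ne' measure_ball_lt_top.ne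
  have hn : (1 : ℝ) < 2 ^ n := one_lt_pow₀ one_lt_two finrank_pos.ne'
  refine ⟨(∫ z in ball 0 1, |g z| ∂μ) / ((2 ^ n - 1) * μ.real (ball 0 1)),
    div_nonneg (setIntegral_nonneg measurableSet_ball fun _ _ ↦ abs_nonneg _)
      (by nlinarith), fun s hs hs1 ↦ ?_⟩
  set A := ball (0 : E) (2 * s) \ ball 0 s
  have hAB : A ⊆ ball 0 1 := sdiff_subset.trans (ball_subset_ball hs1)
  have hAvol : μ.real A = (2 ^ n - 1) * s ^ n * μ.real (ball 0 1) :=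
    addHaar_real_ball_two_mul_sdiff_ball 0 hs.le
  have hApos : 0 < μ.real A := by rw [hAvol]; have := pow_pos hs n; positivity
  have hAfin : μ A ≠ ∞ := measure_ne_top_of_subset hAB measure_ball_lt_top.ne
  obtain ⟨x, ⟨hx2, hx1⟩, hgx⟩ := exists_le_setAverage
    ((measureReal_ne_zero_iff hAfin).1 hApos.ne') hAfin (hg.mono_set hAB)
  refine ⟨x, by simpa using hx1, by simpa using hx2, ?_⟩
  have hint : ∫ z in A, g z ∂μ ≤ ∫ z in ball 0 1, |g z| ∂μ :=
    (setIntegral_mono_on (hg.mono_set hAB) (hg.mono_set hAB).abs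
      (measurableSet_ball.diff measurableSet_ball) fun z _ ↦ le_abs_self _).trans
      (setIntegral_mono_set hg.abs (ae_of_all _ fun z ↦ abs_nonneg _) hAB.eventuallyLE)
  rw [setAverage_eq, smul_eq_mul, inv_mul_eq_div] at hgx
  calc g x ≤ (∫ z in A, g z ∂μ) / μ.real A := hgx
    _ ≤ (∫ z in ball 0 1, |g z| ∂μ) / μ.real A := by gcongr
    _ = _ := by rw [hAvol]; field_simp

variable {β : ℝ} {g h : E → ℝ}

lemma AsymmetricLusinLipschitz.exists_le_near_origin (hgh : AsymmetricLusinLipschitz β g h)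
    (hβ : 0 < β) (hg : IntegrableOn g (ball 0 1) μ) :
    ∃ c > 0, ∃ K ≥ 0, ∀ s, 0 < s → 2 * s ≤ 1 → ∀ y : E, 0 < ‖y‖ → 2 * ‖y‖ ≤ s →
      c * ‖y‖ ^ (-β) / s - K / s ^ finrank ℝ E ≤ h y := by
  obtain ⟨K, hK, hx⟩ := exists_mem_annulus_le_div_pow hg
  refine ⟨(1 - 2 ^ (-β)) / 3,
    div_pos (sub_pos.2 (Real.rpow_lt_one_of_one_lt_of_neg one_lt_two (neg_lt_zero.2 hβ))) three_pos,
    K, hK, fun s hs hs1 y hy hys ↦ ?_⟩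
  obtain ⟨x, hsx, hxs, hgx⟩ := hx s hs hs1
  have hxy := hgh x (mem_ball_zero_iff.2 (by linarith)) y (mem_ball_zero_iff.2 (by linarith))
    (norm_pos_iff.1 (hs.trans_le hsx)) (norm_pos_iff.1 hy)
  have := div_le_of_abs_rpow_neg_sub_le hβ hs hsx hxs.le hy hys hxy
  linarith

lemma AsymmetricLusinLipschitz.exists_le_on_ball (hgh : AsymmetricLusinLipschitz β g h)
    (hβ : 0 < β) (hg : IntegrableOn g (ball 0 1) μ) {γ : ℝ} (hγ : 1 ≤ γ)
    (hγβ : (finrank ℝ E : ℝ) - 1 ≤ γ * β) :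
    ∃ c > 0, ∃ a ∈ Ioo (0 : ℝ) (1 / 2), ∀ s, 0 < s → 2 * s ≤ 1 →
      ∀ y : E, 0 < ‖y‖ → ‖y‖ < a * s ^ γ →
      c * (a * s ^ γ) ^ (-β) / s ≤ h y := by
  obtain ⟨c, hc, K, hK, hlow⟩ := hgh.exists_le_near_origin hβ hg
  set n := finrank ℝ E
  have hsmall : ∀ᶠ a in 𝓝[>] (0 : ℝ), 2 * K * a ^ β < c := by
    have : Tendsto (fun a : ℝ ↦ 2 * K * a ^ β) (𝓝 0) (𝓝 (2 * K * 0 ^ β)) :=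
      ((Real.continuous_rpow_const hβ.le).tendsto 0).const_mul _
    rw [Real.zero_rpow hβ.ne', mul_zero] at this
    exact nhdsWithin_le_nhds (this.eventually_lt_const hc)
  obtain ⟨a, ⟨ha, ha2⟩, haK⟩ :=
    ((show ∀ᶠ a in 𝓝[>] (0 : ℝ), a ∈ Ioo 0 (1 / 2) from Ioo_mem_nhdsGT (by norm_num)).and
      hsmall).exists
  refine ⟨c / 2, half_pos hc, a, ⟨ha, ha2⟩, fun s hs hs1 y hy hyρ ↦ ?_⟩
  set ρ := a * s ^ γ
  have hs1' : s ≤ 1 := by linarith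
  have hsγ : s ^ γ ≤ s := by simpa using Real.rpow_le_rpow_of_exponent_ge hs hs1' hγ
  have hρ : 0 < ρ := by positivity
  have hρβ : ρ ^ β ≤ a ^ β * (s ^ n / s) := by
    rw [Real.mul_rpow ha.le (by positivity), ← Real.rpow_mul hs.le, ← Real.rpow_natCast,
      ← Real.rpow_sub_one hs.ne']
    exact mul_le_mul_of_nonneg_left (Real.rpow_le_rpow_of_exponent_ge hs hs1' hγβ) (by positivity)
  have hKρ : K / s ^ n ≤ c / 2 * ρ ^ (-β) / s := by
    have hsn := pow_pos hs n
    have hρs : ρ ^ β * s ≤ a ^ β * s ^ n := by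
      have := mul_le_mul_of_nonneg_right hρβ hs.le
      rwa [mul_assoc, div_mul_cancel₀ _ hs.ne'] at this
    rw [Real.rpow_neg hρ.le, show c / 2 * (ρ ^ β)⁻¹ / s = c / (2 * (ρ ^ β * s)) by field_simp,
      div_le_div_iff₀ hsn (by positivity)]
    nlinarith [mul_le_mul_of_nonneg_left hρs hK]
  have hyρ' : c * ρ ^ (-β) / s ≤ c * ‖y‖ ^ (-β) / s := by
    gcongr ?_ / _
    exact mul_le_mul_of_nonneg_left (Real.rpow_le_rpow_of_nonpos hy hyρ.le (by linarith)) hc.le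
  have hy2 : 2 * ‖y‖ ≤ s := by
    have := mul_le_mul ha2.le hsγ (by positivity) (by norm_num)
    linarith
  have := hlow s hs hs1 y hy hy2
  linarith [show c * ρ ^ (-β) / s = 2 * (c / 2 * ρ ^ (-β) / s) by ring]

lemma AsymmetricLusinLipschitz.exists_const_mul_rpow_le_integral
    (hgh : AsymmetricLusinLipschitz β g h) (hβ : 0 < β) {q : ℝ} (hq : 0 ≤ q)
    (hg : IntegrableOn g (ball 0 1) μ) (hh : IntegrableOn (fun y ↦ ‖h y‖ ^ q) (ball 0 1) μ)
    {γ : ℝ} (hγ : 1 ≤ γ) (hγβ : (finrank ℝ E : ℝ) - 1 ≤ γ * β) :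
    ∃ C > 0, ∀ s, 0 < s → 2 * s ≤ 1 →
      C * s ^ (γ * (finrank ℝ E - β * q) - q) ≤ ∫ y in ball 0 1, ‖h y‖ ^ q ∂μ := by
  obtain ⟨c, hc, a, ⟨ha, ha2⟩, hlow⟩ := hgh.exists_le_on_ball hβ hg hγ hγβ
  set n := finrank ℝ E
  have hV : 0 < μ.real (ball (0 : E) 1) :=
    ENNReal.toReal_pos (measure_ball_pos μ 0 one_pos).ne' measure_ball_lt_top.ne
  refine ⟨c ^ q * a ^ ((n : ℝ) - β * q) * μ.real (ball 0 1), by positivity, fun s hs hs1 ↦ ?_⟩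
  set ρ := a * s ^ γ
  have hρ : 0 < ρ := by positivity
  have hball : ball (0 : E) ρ ⊆ ball 0 1 := by
    refine ball_subset_ball ?_
    have : s ^ γ ≤ 1 := Real.rpow_le_one hs.le (by linarith) (by linarith)
    nlinarith
  have hae : ∀ᵐ y ∂μ, y ∈ ball (0 : E) ρ → c * ρ ^ (-β) / s ≤ h y := by
    filter_upwards [compl_mem_ae_iff.2 (measure_singleton (0 : E))] with y hy0 hyρ
    exact hlow s hs hs1 y (norm_pos_iff.2 hy0) (mem_ball_zero_iff.1 hyρ)
  have key := rpow_mul_measureReal_le_setIntegral_norm_rpow (by positivity) hq measurableSet_ball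
    hball measure_ball_lt_top.ne hh hae
  rw [addHaar_real_ball 0 hρ.le] at key
  have hLq : (c * ρ ^ (-β) / s) ^ q = c ^ q * ρ ^ (-(β * q)) / s ^ q := by
    rw [Real.div_rpow (by positivity) hs.le, Real.mul_rpow hc.le (by positivity),
      ← Real.rpow_mul hρ.le, neg_mul]
  have hρn : ρ ^ (-(β * q)) * ρ ^ n = a ^ ((n : ℝ) - β * q) * s ^ (γ * ((n : ℝ) - β * q)) := by
    rw [← Real.rpow_natCast, ← Real.rpow_add hρ, Real.mul_rpow ha.le (by positivity),
      ← Real.rpow_mul hs.le]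
    ring_nf
  calc c ^ q * a ^ ((n : ℝ) - β * q) * μ.real (ball 0 1) * s ^ (γ * (n - β * q) - q)
      = c ^ q * (a ^ ((n : ℝ) - β * q) * s ^ (γ * ((n : ℝ) - β * q))) * μ.real (ball 0 1) /
          s ^ q := by rw [Real.rpow_sub hs]; ring
    _ = _ := by rw [← hρn, hLq]; ring
    _ ≤ _ := key

end AddHaar

lemma max_one_mul_sub_neg {n β q : ℝ} (hn : 0 < n) (hβ : 0 < β) (hq : 1 < q)
    (hnq : n - 1 < β * q) : max 1 ((n - 1) / β) * (n - β * q) - q < 0 := by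
  rcases max_cases 1 ((n - 1) / β) with ⟨h, -⟩ | ⟨h, -⟩ <;> rw [h]
  · linarith
  · rw [div_mul_eq_mul_div, sub_neg, div_lt_iff₀ hβ]
    nlinarith

theorem asymmetric_estimate_optimality_general (d : ℕ) (hd : 2 ≤ d) (β q : ℝ)
    (hβ0 : 0 < β) (hq : 1 < q) (g h : Rd d → ℝ)
    (hg : IntegrableOn g (Metric.ball (0 : Rd d) 1))
    (hh : MemLp h (ENNReal.ofReal q) (volume.restrict (Metric.ball (0 : Rd d) 1)))
    (hineq : ∀ x ∈ Metric.ball (0 : Rd d) 1, ∀ y ∈ Metric.ball (0 : Rd d) 1,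
      x ≠ 0 → y ≠ 0 →
      |‖x‖ ^ (-β) - ‖y‖ ^ (-β)| ≤ ‖x - y‖ * (g x + h y)) :
    q ≤ (d - 1) / β := by
  by_contra! hqd
  have : Nonempty (Fin d) := ⟨⟨0, by omega⟩⟩
  have hdim : finrank ℝ (Rd d) = d := finrank_euclideanSpace_fin
  have hq0 : 0 < q := by linarith
  have hhq : IntegrableOn (fun y ↦ ‖h y‖ ^ q) (ball 0 1) := by
    have := hh.integrable_norm_rpow (by simpa using hq0) ENNReal.ofReal_ne_top
    rwa [ENNReal.toReal_ofReal hq0.le] at this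
  obtain ⟨C, hC, hCs⟩ := AsymmetricLusinLipschitz.exists_const_mul_rpow_le_integral hineq hβ0
    hq0.le hg hhq (le_max_left 1 _) (by rw [hdim, ← div_le_iff₀ hβ0]; exact le_max_right _ _)
  have hE := max_one_mul_sub_neg (n := d) (by positivity) hβ0 hq
    (by rwa [div_lt_iff₀ hβ0, mul_comm] at hqd)
  rw [hdim] at hCs
  obtain ⟨s, ⟨hs, hs2⟩, hbig⟩ :=
    ((show ∀ᶠ s in 𝓝[>] (0 : ℝ), s ∈ Ioo 0 (1 / 2) from Ioo_mem_nhdsGT (by norm_num)).and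
      (((tendsto_rpow_neg_nhdsGT_zero hE).const_mul_atTop hC).eventually_gt_atTop
        (∫ y in ball 0 1, ‖h y‖ ^ q))).exists
  exact (hCs s hs (by linarith)).not_gt hbig

/-- **Optimality of the asymmetric Lusin–Lipschitz exponent range.**
If `d ≥ 2`, `0 < β < d`, `q > 1`, and there are `g ∈ L¹(B₁)` and `h ∈ L^q(B₁)` with
`| |x|^{-β} − |y|^{-β} | ≤ |x − y| (g(x) + h(y))` for all (nonzero) `x, y ∈ B₁`,
then `q ≤ (d−1)/β`. -/
theorem asymmetric_estimate_optimality (d : ℕ) (hd : 2 ≤ d) (β q : ℝ)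
    (hβ0 : 0 < β) (hβd : β < d) (hq : 1 < q) (g h : Rd d → ℝ)
    (hg : IntegrableOn g (Metric.ball (0 : Rd d) 1))
    (hh : MemLp h (ENNReal.ofReal q) (volume.restrict (Metric.ball (0 : Rd d) 1)))
    (hineq : ∀ x ∈ Metric.ball (0 : Rd d) 1, ∀ y ∈ Metric.ball (0 : Rd d) 1,
      x ≠ 0 → y ≠ 0 →
      |‖x‖ ^ (-β) - ‖y‖ ^ (-β)| ≤ ‖x - y‖ * (g x + h y)) :
    q ≤ (d - 1) / β :=
  asymmetric_estimate_optimality_general d hd β q hβ0 hq g h hg hh hineq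
end
end
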